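/- arXiv:2107.10948 — 5 statements merged into one kernel-verified Lean document; each statement's English description precedes it below -/
import Mathlib

section
/- Soundness of conjunction introduction: if X and Y are independent Boolean random variables on a probability space with P(X = true) ∈ [t, 1−f] and P(Y = true) ∈ [t', 1−f'], where (t,f),(t',f') ∈ C, then P(X ∧ Y = true) ∈ [t·t', 1 − (f + f' − f·f')]. -/
open MeasureTheory ProbabilityTheory

theorem conj_intro_sound {Ω : Type*} [MeasurableSpace Ω] (μ : Measure Ω) [IsProbabilityMeasure μ]
    (X Y : Ω → Bool) (hX : Measurable X) (hY : Measurable Y)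
    (hindep : IndepFun X Y μ) (t f t' f' : ℝ)
    (hc : 0 ≤ t ∧ 0 ≤ f ∧ t + f ≤ 1) (hc' : 0 ≤ t' ∧ 0 ≤ f' ∧ t' + f' ≤ 1)
    (hXc : (μ {ω | X ω = true}).toReal ∈ Set.Icc t (1 - f))
    (hYc : (μ {ω | Y ω = true}).toReal ∈ Set.Icc t' (1 - f')) :
    (μ {ω | (X ω && Y ω) = true}).toReal ∈ Set.Icc (t * t') (1 - (f + f' - f * f')) := by
  have hset : {ω | (X ω && Y ω) = true} = X ⁻¹' {true} ∩ Y ⁻¹' {true} := by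
    ext ω; simp [Bool.and_eq_true]
  have hmul : μ {ω | (X ω && Y ω) = true}
      = μ {ω | X ω = true} * μ {ω | Y ω = true} := by
    rw [hset]
    have := hindep.measure_inter_preimage_eq_mul (s := {true}) (t := {true})
      (MeasurableSet.singleton true) (MeasurableSet.singleton true)
    simpa [Set.preimage, Set.mem_singleton_iff] using this
  have hfx : μ {ω | X ω = true} ≠ ⊤ := (measure_ne_top μ _)
  have hfy : μ {ω | Y ω = true} ≠ ⊤ := (measure_ne_top μ _)
  rw [hmul, ENNReal.toReal_mul]
  obtain ⟨hx1, hx2⟩ := hXc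
  obtain ⟨hy1, hy2⟩ := hYc
  have hx0 : 0 ≤ (μ {ω | X ω = true}).toReal := ENNReal.toReal_nonneg
  have hy0 : 0 ≤ (μ {ω | Y ω = true}).toReal := ENNReal.toReal_nonneg
  constructor
  · exact mul_le_mul hx1 hy1 hc'.1 hx0
  · nlinarith [mul_le_mul hx2 hy2 hy0 (by obtain ⟨a,b,c⟩ := hc; linarith : (0:ℝ) ≤ 1 - f)]
end

section
/- Soundness of disjunction introduction: if X and Y are independent Boolean random variables with P(X = true) ∈ [t, 1−f] and P(Y = true) ∈ [t', 1−f'], where (t,f),(t',f') ∈ C, then P(X ∨ Y = true) ∈ [t + t' − t·t', 1 − f·f']. -/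
open MeasureTheory ProbabilityTheory

/-! `X ∨ Y` is false exactly when both `X` and `Y` are, so by independence
`P(X ∨ Y) = 1 - (1 - p)(1 - q)` with `p = P(X)`, `q = P(Y)`. This expression is monotone in
`p` and `q`, so the bounds on `p` and `q` transfer to it. -/

section

variable {Ω : Type*} [MeasurableSpace Ω] {μ : Measure Ω} [IsProbabilityMeasure μ] {X Y : Ω → Bool}

lemma probReal_eq_false (hX : Measurable X) :
    μ.real {ω | X ω = false} = 1 - μ.real {ω | X ω = true} := by
  have hcompl : {ω | X ω = false} = {ω | X ω = true}ᶜ := by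
    ext ω; simp
  rw [hcompl]
  exact probReal_compl_eq_one_sub (hX (measurableSet_singleton true))

lemma ProbabilityTheory.IndepFun.probReal_or (hX : Measurable X) (hY : Measurable Y)
    (hXY : IndepFun X Y μ) :
    μ.real {ω | (X ω || Y ω) = true} =
      1 - (1 - μ.real {ω | X ω = true}) * (1 - μ.real {ω | Y ω = true}) := by
  have hor : {ω | (X ω || Y ω) = true} = X ⁻¹' {true} ∪ Y ⁻¹' {true} := by
    ext ω; simp
  have hnor : {ω | (X ω || Y ω) = true}ᶜ = X ⁻¹' {false} ∩ Y ⁻¹' {false} := by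
    ext ω; simp
  have hmeas : MeasurableSet {ω | (X ω || Y ω) = true} := by
    rw [hor]
    exact (hX (measurableSet_singleton true)).union (hY (measurableSet_singleton true))
  calc μ.real {ω | (X ω || Y ω) = true}
      = 1 - μ.real {ω | (X ω || Y ω) = true}ᶜ := by
        rw [probReal_compl_eq_one_sub hmeas, sub_sub_cancel]
    _ = 1 - μ.real {ω | X ω = false} * μ.real {ω | Y ω = false} := by
        rw [hnor, measureReal_def, hXY.measure_inter_preimage_eq_mul _ _
          (measurableSet_singleton false) (measurableSet_singleton false), ENNReal.toReal_mul]
        rfl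
    _ = 1 - (1 - μ.real {ω | X ω = true}) * (1 - μ.real {ω | Y ω = true}) := by
        rw [probReal_eq_false hX, probReal_eq_false hY]

end

lemma one_sub_mul_one_sub_mem_Icc {p q t f t' f' : ℝ} (hp : p ∈ Set.Icc t (1 - f))
    (hq : q ∈ Set.Icc t' (1 - f')) (hp₁ : p ≤ 1) (hq₁ : q ≤ 1) (hf' : 0 ≤ f') :
    1 - (1 - p) * (1 - q) ∈ Set.Icc (t + t' - t * t') (1 - f * f') := by
  obtain ⟨htp, hpf⟩ := hp
  obtain ⟨htq, hqf⟩ := hq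
  constructor
  · nlinarith [mul_le_mul (sub_le_sub_left htp 1) (sub_le_sub_left htq 1)
      (sub_nonneg.2 hq₁) (by linarith : (0 : ℝ) ≤ 1 - t)]
  · nlinarith [mul_le_mul (by linarith : f ≤ 1 - p) (by linarith : f' ≤ 1 - q) hf'
      (sub_nonneg.2 hp₁)]

theorem disj_intro_sound_general {Ω : Type*} [MeasurableSpace Ω] (μ : Measure Ω) [IsProbabilityMeasure μ]
    (X Y : Ω → Bool) (hX : Measurable X) (hY : Measurable Y)
    (hindep : IndepFun X Y μ) (t f t' f' : ℝ)
    (hc' : 0 ≤ t' ∧ 0 ≤ f' ∧ t' + f' ≤ 1)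
    (hXc : (μ {ω | X ω = true}).toReal ∈ Set.Icc t (1 - f))
    (hYc : (μ {ω | Y ω = true}).toReal ∈ Set.Icc t' (1 - f')) :
    (μ {ω | (X ω || Y ω) = true}).toReal ∈ Set.Icc (t + t' - t * t') (1 - f * f') := by
  rw [← measureReal_def, hindep.probReal_or hX hY]
  exact one_sub_mul_one_sub_mem_Icc hXc hYc measureReal_le_one measureReal_le_one hc'.2.1

theorem disj_intro_sound {Ω : Type*} [MeasurableSpace Ω] (μ : Measure Ω) [IsProbabilityMeasure μ]
    (X Y : Ω → Bool) (hX : Measurable X) (hY : Measurable Y)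
    (hindep : IndepFun X Y μ) (t f t' f' : ℝ)
    (hc : 0 ≤ t ∧ 0 ≤ f ∧ t + f ≤ 1) (hc' : 0 ≤ t' ∧ 0 ≤ f' ∧ t' + f' ≤ 1)
    (hXc : (μ {ω | X ω = true}).toReal ∈ Set.Icc t (1 - f))
    (hYc : (μ {ω | Y ω = true}).toReal ∈ Set.Icc t' (1 - f')) :
    (μ {ω | (X ω || Y ω) = true}).toReal ∈ Set.Icc (t + t' - t * t') (1 - f * f') :=
  disj_intro_sound_general μ X Y hX hY hindep t f t' f' hc' hXc hYc
end

section
/- Soundness of implication introduction: if X and Y are independent Boolean random variables with P(X = true) ∈ [t, 1−f] and P(Y = true) ∈ [t', 1−f'], where (t,f),(t',f') ∈ C, then P((X ⇒ Y) = true) ∈ [f + t' − f·t', 1 − t·f'], where X ⇒ Y is the pointwise Boolean implication (¬X ∨ Y). -/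
open MeasureTheory ProbabilityTheory

theorem imp_intro_sound {Ω : Type*} [MeasurableSpace Ω] (μ : Measure Ω) [IsProbabilityMeasure μ]
    (X Y : Ω → Bool) (hX : Measurable X) (hY : Measurable Y)
    (hindep : IndepFun X Y μ) (t f t' f' : ℝ)
    (hc : 0 ≤ t ∧ 0 ≤ f ∧ t + f ≤ 1) (hc' : 0 ≤ t' ∧ 0 ≤ f' ∧ t' + f' ≤ 1)
    (hXc : (μ {ω | X ω = true}).toReal ∈ Set.Icc t (1 - f))
    (hYc : (μ {ω | Y ω = true}).toReal ∈ Set.Icc t' (1 - f')) :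
    (μ {ω | (!X ω || Y ω) = true}).toReal ∈ Set.Icc (f + t' - f * t') (1 - t * f') := by
  obtain ⟨ht, hf, htf⟩ := hc
  obtain ⟨ht', hf', htf'⟩ := hc'
  set A : Set Ω := X ⁻¹' {true} with hAdef
  set C : Set Ω := Y ⁻¹' {false} with hCdef
  have hAm : MeasurableSet A := hX (measurableSet_singleton true)
  have hCm : MeasurableSet C := hY (measurableSet_singleton false)
  have hmul : μ (A ∩ C) = μ A * μ C :=
    hindep.measure_inter_preimage_eq_mul _ _ (measurableSet_singleton true)
      (measurableSet_singleton false)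
  have hset : {ω | (!X ω || Y ω) = true} = (A ∩ C)ᶜ := by
    ext ω
    simp only [Set.mem_setOf_eq, Set.mem_compl_iff, Set.mem_inter_iff, Set.mem_preimage,
      Set.mem_singleton_iff, hAdef, hCdef]
    cases hx : X ω <;> cases hy : Y ω <;> simp
  have hCcompl : C = (Y ⁻¹' {true})ᶜ := by
    ext ω
    simp [hCdef, Bool.not_eq_true]
  have hB : {ω | Y ω = true} = Y ⁻¹' {true} := rfl
  have hA' : {ω | X ω = true} = A := rfl
  have hBm : MeasurableSet (Y ⁻¹' {true}) := hY (measurableSet_singleton true)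
  set p := (μ A).toReal with hp
  set q := (μ (Y ⁻¹' {true})).toReal with hq
  have hμC : (μ C).toReal = 1 - q := by
    rw [hCcompl, prob_compl_eq_one_sub hBm, ENNReal.toReal_sub_of_le prob_le_one (by simp)]
    simp [hq]
  have hfin : μ (A ∩ C) ≠ ⊤ := (measure_lt_top μ _).ne
  have hkey : (μ {ω | (!X ω || Y ω) = true}).toReal = 1 - p * (1 - q) := by
    rw [hset, prob_compl_eq_one_sub (hAm.inter hCm),
      ENNReal.toReal_sub_of_le prob_le_one (by simp), hmul, ENNReal.toReal_mul]
    simp [hp, hμC]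
  rw [hA'] at hXc
  rw [hB] at hYc
  obtain ⟨hp1, hp2⟩ := hXc
  obtain ⟨hq1, hq2⟩ := hYc
  rw [hkey]
  constructor
  · nlinarith [mul_nonneg ht' hf, mul_nonneg ht hf']
  · nlinarith [mul_nonneg ht' hf, mul_nonneg ht hf']
end

section
/- Soundness of left implication elimination: if X and Y are independent Boolean random variables with P((X ⇒ Y) = true) ∈ [t, 1−f] and P(X = true) ∈ [t', 1−f'], with t' ≠ 0 and f' ≠ 1, then P(Y = true) ≥ max(0, 1 − (1−t)/t') and P(Y = false) ≥ max(0, f/(1−f')) truncated at 1, i.e., P(Y = true) ∈ [min(max(1 − (1−t)/t', 0), 1), 1 − min(max(f/(1−f'), 0), 1)]. -/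
open MeasureTheory ProbabilityTheory

theorem imp_elim_left_sound {Ω : Type*} [MeasurableSpace Ω] (μ : Measure Ω)
    [IsProbabilityMeasure μ]
    (X Y : Ω → Bool) (hX : Measurable X) (hY : Measurable Y)
    (hindep : IndepFun X Y μ) (t f t' f' : ℝ)
    (hc : 0 ≤ t ∧ 0 ≤ f ∧ t + f ≤ 1) (hc' : 0 ≤ t' ∧ 0 ≤ f' ∧ t' + f' ≤ 1)
    (ht' : t' ≠ 0) (hf' : f' ≠ 1)
    (hImp : (μ {ω | (!X ω || Y ω) = true}).toReal ∈ Set.Icc t (1 - f))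
    (hXc : (μ {ω | X ω = true}).toReal ∈ Set.Icc t' (1 - f')) :
    (μ {ω | Y ω = true}).toReal ∈
      Set.Icc (min (max (1 - (1 - t) / t') 0) 1) (1 - min (max (f / (1 - f')) 0) 1) := by
  obtain ⟨ht0, hf0, htf⟩ := hc
  obtain ⟨ht'0, hf'0, htf'⟩ := hc'
  have hA : MeasurableSet (X ⁻¹' {true}) := hX (measurableSet_singleton true)
  have hB : MeasurableSet (Y ⁻¹' {true}) := hY (measurableSet_singleton true)
  have hC : MeasurableSet (X ⁻¹' {true} ∩ Y ⁻¹' {false}) :=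
    hA.inter (hY (measurableSet_singleton false))
  set p : ℝ := (μ {ω | X ω = true}).toReal with hpdef
  set q : ℝ := (μ {ω | Y ω = true}).toReal with hqdef
  have hAeq : X ⁻¹' {true} = {ω | X ω = true} := rfl
  have hBeq : Y ⁻¹' {true} = {ω | Y ω = true} := rfl
  have hp0 : 0 ≤ p := ENNReal.toReal_nonneg
  have hq0 : 0 ≤ q := ENNReal.toReal_nonneg
  have hp1 : p ≤ 1 := by
    have := ENNReal.toReal_mono ENNReal.one_ne_top (prob_le_one (μ := μ) (s := {ω | X ω = true}))
    simpa using this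
  have hq1 : q ≤ 1 := by
    have := ENNReal.toReal_mono ENNReal.one_ne_top (prob_le_one (μ := μ) (s := {ω | Y ω = true}))
    simpa using this
  have hCset : Y ⁻¹' {false} = (Y ⁻¹' {true})ᶜ := by
    ext ω; simp
  have hqf : (μ (Y ⁻¹' {false})).toReal = 1 - q := by
    rw [hCset, prob_compl_eq_one_sub hB,
      ENNReal.toReal_sub_of_le (prob_le_one) ENNReal.one_ne_top]
    simp [hqdef, hBeq]
  have hmul : μ (X ⁻¹' {true} ∩ Y ⁻¹' {false}) = μ (X ⁻¹' {true}) * μ (Y ⁻¹' {false}) :=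
    hindep.measure_inter_preimage_eq_mul {true} {false}
      (measurableSet_singleton _) (measurableSet_singleton _)
  have hmulR : (μ (X ⁻¹' {true} ∩ Y ⁻¹' {false})).toReal = p * (1 - q) := by
    rw [hmul, ENNReal.toReal_mul, hqf]; rfl
  have hSset : {ω | (!X ω || Y ω) = true} = (X ⁻¹' {true} ∩ Y ⁻¹' {false})ᶜ := by
    ext ω
    simp only [Set.mem_setOf_eq, Set.mem_compl_iff, Set.mem_inter_iff, Set.mem_preimage,
      Set.mem_singleton_iff]
    cases hx : X ω <;> cases hy : Y ω <;> simp
  have hSR : (μ {ω | (!X ω || Y ω) = true}).toReal = 1 - p * (1 - q) := by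
    rw [hSset, prob_compl_eq_one_sub hC,
      ENNReal.toReal_sub_of_le (prob_le_one) ENNReal.one_ne_top, hmulR]
    simp
  rw [hSR] at hImp
  obtain ⟨hImp1, hImp2⟩ := hImp
  obtain ⟨hXc1, hXc2⟩ := hXc
  have ht'pos : 0 < t' := lt_of_le_of_ne ht'0 (Ne.symm ht')
  have hf'lt : 0 < 1 - f' := by nlinarith
  constructor
  · refine le_trans (min_le_left _ _) (max_le ?_ hq0)
    have h2 : 1 - q ≤ (1 - t) / t' := by
      rw [le_div_iff₀ ht'pos]
      nlinarith
    linarith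
  · have h1 : f / (1 - f') ≤ 1 - q := by
      rw [div_le_iff₀ hf'lt]
      nlinarith
    have : min (max (f / (1 - f')) 0) 1 ≤ 1 - q :=
      le_trans (min_le_left _ _) (max_le h1 (by linarith))
    linarith
end

section
/- Monotonicity of QCL proofs: for any propositional formula φ that is linear (each atom occurs at most once) and built from atoms, ⊤, ⊥ using ∧ and ∨, the induced confidence of φ, computed by assigning each atom A its confidence c_A ∈ C and propagating via the conjunction operation (t,f),(t',f') ↦ (t·t', f+f'−f·f') and disjunction operation (t,f),(t',f') ↦ (t+t'−t·t', f·f'), is monotone non-decreasing (for the confidence order ⊑) in each atom's confidence. -/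
/-- Propositional formulas over atoms ℕ, ⊤, ⊥, conjunction and disjunction. -/
inductive Form where
  | atom : ℕ → Form
  | top  : Form
  | bot  : Form
  | and  : Form → Form → Form
  | or   : Form → Form → Form

/-- The list of atoms occurring in a formula (with multiplicity). -/
def Form.atomList : Form → List ℕ
  | .atom A => [A]
  | .top => []
  | .bot => []
  | .and φ ψ => φ.atomList ++ ψ.atomList
  | .or φ ψ => φ.atomList ++ ψ.atomList

/-- A formula is linear when each atom occurs at most once. -/
def Form.Linear (φ : Form) : Prop := φ.atomList.Nodup

/-- Compositional confidence evaluation. -/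
def Form.evalConf (c : ℕ → ℝ × ℝ) : Form → ℝ × ℝ
  | .atom A => c A
  | .top => (1, 0)
  | .bot => (0, 1)
  | .and φ ψ => ((φ.evalConf c).1 * (ψ.evalConf c).1,
      (φ.evalConf c).2 + (ψ.evalConf c).2 - (φ.evalConf c).2 * (ψ.evalConf c).2)
  | .or φ ψ => ((φ.evalConf c).1 + (ψ.evalConf c).1 - (φ.evalConf c).1 * (ψ.evalConf c).1,
      (φ.evalConf c).2 * (ψ.evalConf c).2)

lemma evalConf_bounds (c : ℕ → ℝ × ℝ)
    (hc : ∀ A, 0 ≤ (c A).1 ∧ 0 ≤ (c A).2 ∧ (c A).1 + (c A).2 ≤ 1) (φ : Form) :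
    0 ≤ (φ.evalConf c).1 ∧ (φ.evalConf c).1 ≤ 1 ∧
    0 ≤ (φ.evalConf c).2 ∧ (φ.evalConf c).2 ≤ 1 := by
  induction φ with
  | atom A => obtain ⟨h1, h2, h3⟩ := hc A; refine ⟨h1, ?_, h2, ?_⟩ <;> simp only [Form.evalConf] <;> linarith
  | top => simp [Form.evalConf]
  | bot => simp [Form.evalConf]
  | and φ ψ ihφ ihψ =>
    obtain ⟨a1, a2, a3, a4⟩ := ihφ; obtain ⟨b1, b2, b3, b4⟩ := ihψ
    simp only [Form.evalConf]; refine ⟨by positivity, ?_, ?_, ?_⟩ <;> nlinarith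
  | or φ ψ ihφ ihψ =>
    obtain ⟨a1, a2, a3, a4⟩ := ihφ; obtain ⟨b1, b2, b3, b4⟩ := ihψ
    simp only [Form.evalConf]; refine ⟨?_, ?_, by positivity, ?_⟩ <;> nlinarith

theorem evalConf_monotone (φ : Form) (hlin : φ.Linear) (c c' : ℕ → ℝ × ℝ)
    (hc : ∀ A, 0 ≤ (c A).1 ∧ 0 ≤ (c A).2 ∧ (c A).1 + (c A).2 ≤ 1)
    (hc' : ∀ A, 0 ≤ (c' A).1 ∧ 0 ≤ (c' A).2 ∧ (c' A).1 + (c' A).2 ≤ 1)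
    (hle : ∀ A, (c A).1 ≤ (c' A).1 ∧ (c A).2 ≤ (c' A).2) :
    (φ.evalConf c).1 ≤ (φ.evalConf c').1 ∧ (φ.evalConf c).2 ≤ (φ.evalConf c').2 := by
  clear hlin
  induction φ with
  | atom A => exact hle A
  | top => exact ⟨le_refl _, le_refl _⟩
  | bot => exact ⟨le_refl _, le_refl _⟩
  | and φ ψ ihφ ihψ =>
    obtain ⟨a1, a2, a3, a4⟩ := evalConf_bounds c hc φ
    obtain ⟨b1, b2, b3, b4⟩ := evalConf_bounds c hc ψ
    obtain ⟨a1', a2', a3', a4'⟩ := evalConf_bounds c' hc' φ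
    obtain ⟨b1', b2', b3', b4'⟩ := evalConf_bounds c' hc' ψ
    obtain ⟨p1, p2⟩ := ihφ; obtain ⟨q1, q2⟩ := ihψ
    constructor <;> simp only [Form.evalConf] <;> nlinarith
  | or φ ψ ihφ ihψ =>
    obtain ⟨a1, a2, a3, a4⟩ := evalConf_bounds c hc φ
    obtain ⟨b1, b2, b3, b4⟩ := evalConf_bounds c hc ψ
    obtain ⟨a1', a2', a3', a4'⟩ := evalConf_bounds c' hc' φ
    obtain ⟨b1', b2', b3', b4'⟩ := evalConf_bounds c' hc' ψ
    obtain ⟨p1, p2⟩ := ihφ; obtain ⟨q1, q2⟩ := ihψ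
    constructor <;> simp only [Form.evalConf] <;> nlinarith
end
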